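/- arXiv:1303.3173 — 3 statements merged into one kernel-verified Lean document; each statement's English description precedes it below -/
import Mathlib

section
/- Let R be a commutative ring and s ∈ R. A matrix A ∈ K_s(R) is a unit of the generalized matrix ring K_s(R) if and only if det_s(A) is a unit of R; moreover, in this case, if A = [[a,b],[c,d]], then A⁻¹ = det_s(A)⁻¹·[[d,−b],[−c,a]] (computed in K_s(R)). -/
/-- The generalized matrix ring `K_s(R)` with multiplier `s`. -/
@[ext]
structure GenMatrix (R : Type*) (s : R) where
  a : R
  b : R
  c : R
  d : R

namespace GenMatrix

variable {R : Type*} [Ring R] {s : R}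

instance : Add (GenMatrix R s) :=
  ⟨fun X Y => ⟨X.a + Y.a, X.b + Y.b, X.c + Y.c, X.d + Y.d⟩⟩
instance : Neg (GenMatrix R s) := ⟨fun X => ⟨-X.a, -X.b, -X.c, -X.d⟩⟩
instance : Zero (GenMatrix R s) := ⟨⟨0, 0, 0, 0⟩⟩
instance : One (GenMatrix R s) := ⟨⟨1, 0, 0, 1⟩⟩
instance : Mul (GenMatrix R s) :=
  ⟨fun X Y => ⟨X.a * Y.a + s * (X.b * Y.c), X.a * Y.b + X.b * Y.d,
    X.c * Y.a + X.d * Y.c, s * (X.c * Y.b) + X.d * Y.d⟩⟩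

@[simp] lemma add_a (X Y : GenMatrix R s) : (X + Y).a = X.a + Y.a := rfl
@[simp] lemma add_b (X Y : GenMatrix R s) : (X + Y).b = X.b + Y.b := rfl
@[simp] lemma add_c (X Y : GenMatrix R s) : (X + Y).c = X.c + Y.c := rfl
@[simp] lemma add_d (X Y : GenMatrix R s) : (X + Y).d = X.d + Y.d := rfl
@[simp] lemma neg_a (X : GenMatrix R s) : (-X).a = -X.a := rfl
@[simp] lemma neg_b (X : GenMatrix R s) : (-X).b = -X.b := rfl
@[simp] lemma neg_c (X : GenMatrix R s) : (-X).c = -X.c := rfl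
@[simp] lemma neg_d (X : GenMatrix R s) : (-X).d = -X.d := rfl
@[simp] lemma zero_a : (0 : GenMatrix R s).a = 0 := rfl
@[simp] lemma zero_b : (0 : GenMatrix R s).b = 0 := rfl
@[simp] lemma zero_c : (0 : GenMatrix R s).c = 0 := rfl
@[simp] lemma zero_d : (0 : GenMatrix R s).d = 0 := rfl
@[simp] lemma one_a : (1 : GenMatrix R s).a = 1 := rfl
@[simp] lemma one_b : (1 : GenMatrix R s).b = 0 := rfl
@[simp] lemma one_c : (1 : GenMatrix R s).c = 0 := rfl
@[simp] lemma one_d : (1 : GenMatrix R s).d = 1 := rfl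
@[simp] lemma mul_a (X Y : GenMatrix R s) : (X * Y).a = X.a * Y.a + s * (X.b * Y.c) := rfl
@[simp] lemma mul_b (X Y : GenMatrix R s) : (X * Y).b = X.a * Y.b + X.b * Y.d := rfl
@[simp] lemma mul_c (X Y : GenMatrix R s) : (X * Y).c = X.c * Y.a + X.d * Y.c := rfl
@[simp] lemma mul_d (X Y : GenMatrix R s) : (X * Y).d = s * (X.c * Y.b) + X.d * Y.d := rfl

instance : AddCommGroup (GenMatrix R s) where
  add_assoc X Y Z := by ext <;> simp [add_assoc]
  zero_add X := by ext <;> simp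
  add_zero X := by ext <;> simp
  add_comm X Y := by ext <;> simp [add_comm]
  neg_add_cancel X := by ext <;> simp
  nsmul := nsmulRec
  zsmul := zsmulRec

section Central

variable [Fact (s ∈ Set.center R)]

lemma scomm (r : R) : r * s = s * r := Semigroup.mem_center_iff.mp Fact.out r

lemma sshift (r t : R) : r * (s * t) = s * (r * t) := by
  rw [← mul_assoc, scomm (s := s), mul_assoc]

instance : Ring (GenMatrix R s) where
  __ := (inferInstance : AddCommGroup (GenMatrix R s))
  left_distrib X Y Z := by ext <;> simp [mul_add, add_mul] <;> abel
  right_distrib X Y Z := by ext <;> simp [mul_add, add_mul] <;> abel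
  zero_mul X := by ext <;> simp
  mul_zero X := by ext <;> simp
  mul_assoc X Y Z := by
    ext <;> simp only [mul_a, mul_b, mul_c, mul_d, mul_add, add_mul, mul_assoc, sshift] <;> abel
  one_mul X := by ext <;> simp
  mul_one X := by ext <;> simp

end Central

instance central_of_comm {R : Type*} [CommRing R] (s : R) : Fact (s ∈ Set.center R) :=
  ⟨by rw [Set.center_eq_univ]; trivial⟩

/-- `det_s` of a generalized matrix over a commutative ring. -/
def dets {R : Type*} {s : R} [CommRing R] (A : GenMatrix R s) : R :=
  A.a * A.d - s * (A.b * A.c)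

/-- The trace of a generalized matrix. -/
def tr {R : Type*} {s : R} [Ring R] (A : GenMatrix R s) : R := A.a + A.d

end GenMatrix

/-- An element `a` is quasinilpotent if `1 + a*x` is a unit for every `x` commuting with `a`. -/
def IsQuasinilpotent {R : Type*} [Ring R] (a : R) : Prop :=
  ∀ x : R, a * x = x * a → IsUnit (1 + a * x)

/-- An element `a` is quasipolar if there is an idempotent `p` in the double commutant of `a`
with `a + p` a unit and `a * p` quasinilpotent. -/
def IsQuasipolar {R : Type*} [Ring R] (a : R) : Prop :=
  ∃ p : R, IsIdempotentElem p ∧ (∀ y : R, y * a = a * y → p * y = y * p) ∧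
    IsUnit (a + p) ∧ IsQuasinilpotent (a * p)

/-- A ring is quasipolar if every element is quasipolar. -/
def IsQuasipolarRing (R : Type*) [Ring R] : Prop := ∀ a : R, IsQuasipolar a

/-- An element is strongly clean if it is the sum of an idempotent and a unit that commute. -/
def IsStronglyClean {R : Type*} [Ring R] (a : R) : Prop :=
  ∃ e u : R, IsIdempotentElem e ∧ IsUnit u ∧ a = e + u ∧ e * u = u * e

/-- A ring is strongly clean if every element is strongly clean. -/
def IsStronglyCleanRing (R : Type*) [Ring R] : Prop := ∀ a : R, IsStronglyClean a

/-- `a` is similar to `b` if `b = u⁻¹ * a * u` for some unit `u`. -/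
def IsSimilar {R : Type*} [Ring R] (a b : R) : Prop :=
  ∃ u : Rˣ, b = ↑u⁻¹ * a * ↑u

/-- The Jacobson radical of a ring: the intersection of all maximal left ideals. -/
def JacobsonRadical (R : Type*) [Ring R] : Ideal R := Ideal.jacobson ⊥

namespace GenMatrix

variable {R : Type*} [CommRing R] {s : R}

lemma dets_one : dets (1 : GenMatrix R s) = 1 := by
  simp [dets]

lemma dets_mul (X Y : GenMatrix R s) : dets (X * Y) = dets X * dets Y := by
  simp only [dets, mul_a, mul_b, mul_c, mul_d]
  ring

def detsHom : GenMatrix R s →* R where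
  toFun := dets
  map_one' := dets_one
  map_mul' := dets_mul

lemma isUnit_dets {A : GenMatrix R s} (hA : IsUnit A) : IsUnit (dets A) :=
  hA.map detsHom

lemma mul_smul_adjugate_eq_one {A : GenMatrix R s} {v : R} (hv : v * dets A = 1) :
    A * (⟨v * A.d, v * -A.b, v * -A.c, v * A.a⟩ : GenMatrix R s) = 1 := by
  rw [dets] at hv
  ext <;> simp only [mul_a, mul_b, mul_c, mul_d, one_a, one_b, one_c, one_d]
  · linear_combination hv
  · ring
  · ring
  · linear_combination hv

lemma smul_adjugate_mul_eq_one {A : GenMatrix R s} {v : R} (hv : v * dets A = 1) :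
    (⟨v * A.d, v * -A.b, v * -A.c, v * A.a⟩ : GenMatrix R s) * A = 1 := by
  rw [dets] at hv
  ext <;> simp only [mul_a, mul_b, mul_c, mul_d, one_a, one_b, one_c, one_d]
  · linear_combination hv
  · ring
  · ring
  · linear_combination hv

lemma isUnit_of_isUnit_dets {A : GenMatrix R s} (h : IsUnit (dets A)) : IsUnit A := by
  obtain ⟨v, hv⟩ := h.exists_left_inv
  exact isUnit_iff_exists.mpr ⟨_, mul_smul_adjugate_eq_one hv, smul_adjugate_mul_eq_one hv⟩

end GenMatrix

/-- `A` is a unit of `K_s(R)` iff `det_s(A)` is a unit of `R`; in that case,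
if `v = det_s(A)⁻¹` then `v • [[d, -b], [-c, a]]` is the (two-sided) inverse of `A`. -/
theorem genMatrix_isUnit_iff_isUnit_dets {R : Type*} [CommRing R] (s : R)
    (A : GenMatrix R s) :
    (IsUnit A ↔ IsUnit (GenMatrix.dets A)) ∧
      (∀ v : R, v * GenMatrix.dets A = 1 →
        A * (⟨v * A.d, v * -A.b, v * -A.c, v * A.a⟩ : GenMatrix R s) = 1 ∧
        (⟨v * A.d, v * -A.b, v * -A.c, v * A.a⟩ : GenMatrix R s) * A = 1) :=
  ⟨⟨GenMatrix.isUnit_dets, GenMatrix.isUnit_of_isUnit_dets⟩,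
    fun _ hv => ⟨GenMatrix.mul_smul_adjugate_eq_one hv, GenMatrix.smul_adjugate_mul_eq_one hv⟩⟩
end

section
/- Let R be a local ring and let s ∈ R be central, and let E be an idempotent of K_s(R) with E ≠ 0 and E ≠ I₂. Then: (1) if s is a unit of R, then E is similar in K_s(R) to the diagonal matrix [[1,0],[0,0]]; (2) if s ∈ J(R), then E is similar in K_s(R) to [[1,0],[0,0]] or to [[0,0],[0,1]]. -/
/-!
Write `E = [[a, b], [c, d]]`. For idempotents `e`, `f` the element `e + f - 1` intertwines them,
and `(e + f - 1)² = f e f + (1 - f)(1 - e)(1 - f)`; for `f = diag(1, 0)` this is `diag(a, 1 - d)`.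
So `E ∼ diag(1, 0)` as soon as `a` and `1 - d` are units, and likewise `E ∼ diag(0, 1)` as soon as
`1 - a` and `d` are units. Over a local ring one of the two happens for `E ≠ 0, 1`: were `a`, `d`
units and `1 - d` not, then `s c b = d (1 - d)`, hence `s c a⁻¹ b`, would be a non-unit, so the
Schur complement `d - s c a⁻¹ b` and with it `E` would be invertible. When `s` is a unit, the swap
`[[0, 1], [1, 0]]` conjugates `diag(0, 1)` into `diag(1, 0)`.
-/

theorem IsLocalRing.mul_eq_one_symm {R : Type*} [Ring R] [IsLocalRing R] {x y : R}
    (h : x * y = 1) : y * x = 1 := by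
  have hyx : IsIdempotentElem (y * x) := by
    rw [IsIdempotentElem, mul_assoc, ← mul_assoc x, h, one_mul]
  rcases IsLocalRing.isUnit_or_isUnit_of_add_one (add_sub_cancel (y * x) 1) with hu | hu
  · exact (IsIdempotentElem.iff_eq_one_of_isUnit hu).mp hyx
  · have hyx0 : y * x = 0 :=
      sub_eq_self.mp ((IsIdempotentElem.iff_eq_one_of_isUnit hu).mp hyx.one_sub)
    have hy0 : y = 0 := by rw [← mul_one y, ← h, ← mul_assoc, hyx0, zero_mul]
    exact (zero_ne_one (by rw [← h, hy0, mul_zero])).elim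

instance IsLocalRing.toIsDedekindFiniteMonoid {R : Type*} [Ring R] [IsLocalRing R] :
    IsDedekindFiniteMonoid R :=
  ⟨IsLocalRing.mul_eq_one_symm⟩

section Similarity

variable {M : Type*} [Ring M] {e f u : M}

theorem isSimilar_of_mul_eq (hu : IsUnit u) (h : e * u = u * f) : IsSimilar e f := by
  obtain ⟨u, rfl⟩ := hu
  exact ⟨u, by rw [mul_assoc, h, ← mul_assoc, u.inv_mul, one_mul]⟩

theorem IsSimilar.trans {g : M} (hef : IsSimilar e f) (hfg : IsSimilar f g) : IsSimilar e g := by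
  obtain ⟨u, rfl⟩ := hef
  obtain ⟨v, rfl⟩ := hfg
  exact ⟨u * v, by simp [mul_assoc]⟩

/-- `e (e + f - 1) = e f = (e + f - 1) f`. -/
theorem IsIdempotentElem.isSimilar_of_isUnit_add_sub_one (he : IsIdempotentElem e)
    (hf : IsIdempotentElem f) (h : IsUnit (e + f - 1)) : IsSimilar e f :=
  isSimilar_of_mul_eq h <| by
    simp only [mul_sub, mul_add, add_mul, sub_mul, he.eq, hf.eq, mul_one, one_mul]; abel

theorem IsIdempotentElem.add_sub_one_mul_self (he : IsIdempotentElem e) (f : M) :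
    (e + f - 1) * (e + f - 1) = f * e * f + (1 - f) * (1 - e) * (1 - f) := by
  have h : (e + f - 1) * (e + f - 1) - (f * e * f + (1 - f) * (1 - e) * (1 - f)) =
      e * e - e := by
    noncomm_ring
  rwa [he.eq, sub_self, sub_eq_zero] at h

end Similarity

namespace GenMatrix

variable {R : Type*} [Ring R] {s : R}

lemma isIdempotentElem_e11 : IsIdempotentElem (⟨1, 0, 0, 0⟩ : GenMatrix R s) := by
  ext <;> simp

lemma isIdempotentElem_e22 : IsIdempotentElem (⟨0, 0, 0, 1⟩ : GenMatrix R s) := by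
  ext <;> simp

variable [Fact (s ∈ Set.center R)]

@[simp] lemma sub_a (X Y : GenMatrix R s) : (X - Y).a = X.a - Y.a := by
  rw [sub_eq_add_neg, sub_eq_add_neg]; rfl
@[simp] lemma sub_b (X Y : GenMatrix R s) : (X - Y).b = X.b - Y.b := by
  rw [sub_eq_add_neg, sub_eq_add_neg]; rfl
@[simp] lemma sub_c (X Y : GenMatrix R s) : (X - Y).c = X.c - Y.c := by
  rw [sub_eq_add_neg, sub_eq_add_neg]; rfl
@[simp] lemma sub_d (X Y : GenMatrix R s) : (X - Y).d = X.d - Y.d := by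
  rw [sub_eq_add_neg, sub_eq_add_neg]; rfl

lemma isUnit_upperTriangular {u v : R} (hu : IsUnit u) (hv : IsUnit v) (b : R) :
    IsUnit (⟨u, b, 0, v⟩ : GenMatrix R s) := by
  obtain ⟨u, rfl⟩ := hu
  obtain ⟨v, rfl⟩ := hv
  exact isUnit_iff_exists.mpr ⟨⟨↑u⁻¹, -(↑u⁻¹ * b * ↑v⁻¹), 0, ↑v⁻¹⟩,
    by ext <;> simp [mul_assoc], by ext <;> simp [mul_assoc]⟩

lemma isUnit_of_isUnit_mul_self {X : GenMatrix R s} (h : IsUnit (X * X)) : IsUnit X :=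
  (isUnit_pow_iff two_ne_zero).mp (by rwa [pow_two])

/-- Block LU factorisation: `X = [[1, 0], [c a⁻¹, 1]] [[a, b], [0, δ]]` with `δ` the Schur
complement. -/
lemma isUnit_of_isUnit_a_of_isUnit_schur {X : GenMatrix R s} (ha : IsUnit X.a)
    (hδ : IsUnit (X.d - s * (X.c * (Ring.inverse X.a * X.b)))) : IsUnit X := by
  have hL : IsUnit (⟨1, 0, X.c * Ring.inverse X.a, 1⟩ : GenMatrix R s) :=
    isUnit_iff_exists.mpr ⟨⟨1, 0, -(X.c * Ring.inverse X.a), 1⟩, by ext <;> simp, by ext <;> simp⟩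
  convert hL.mul (isUnit_upperTriangular ha hδ X.b)
  ext <;> simp [mul_assoc, Ring.inverse_mul_cancel _ ha]

lemma isSimilar_e22_e11 (hs : IsUnit s) :
    IsSimilar (⟨0, 0, 0, 1⟩ : GenMatrix R s) ⟨1, 0, 0, 0⟩ := by
  refine isSimilar_of_mul_eq (u := ⟨0, 1, 1, 0⟩) (isUnit_of_isUnit_mul_self ?_) (by ext <;> simp)
  convert isUnit_upperTriangular hs hs 0 using 1
  ext <;> simp

variable {E : GenMatrix R s}

lemma isSimilar_e11_of_isUnit (hE : IsIdempotentElem E) (ha : IsUnit E.a)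
    (hd : IsUnit (1 - E.d)) : IsSimilar E ⟨1, 0, 0, 0⟩ := by
  refine hE.isSimilar_of_isUnit_add_sub_one isIdempotentElem_e11 (isUnit_of_isUnit_mul_self ?_)
  rw [hE.add_sub_one_mul_self]
  convert isUnit_upperTriangular ha hd 0 using 1
  ext <;> simp

lemma isSimilar_e22_of_isUnit (hE : IsIdempotentElem E) (ha : IsUnit (1 - E.a))
    (hd : IsUnit E.d) : IsSimilar E ⟨0, 0, 0, 1⟩ := by
  refine hE.isSimilar_of_isUnit_add_sub_one isIdempotentElem_e22 (isUnit_of_isUnit_mul_self ?_)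
  rw [hE.add_sub_one_mul_self]
  convert isUnit_upperTriangular ha hd 0 using 1
  ext <;> simp

section Local

variable [IsLocalRing R]

lemma isUnit_one_sub_d_of_isUnit_a (hE : IsIdempotentElem E) (hEu : ¬IsUnit E)
    (ha : IsUnit E.a) : IsUnit (1 - E.d) := by
  by_contra hd1
  have hd : IsUnit E.d :=
    (IsLocalRing.isUnit_or_isUnit_of_add_one (add_sub_cancel E.d 1)).resolve_right hd1
  have hscb : ¬IsUnit (s * (E.c * E.b)) := by
    rw [eq_sub_of_add_eq (congrArg GenMatrix.d hE.eq), ← mul_one_sub]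
    exact fun h => hd1 (isUnit_of_mul_isUnit_right h)
  have hscab : ¬IsUnit (s * (E.c * (Ring.inverse E.a * E.b))) := by
    simp only [IsUnit.mul_iff] at hscb ⊢
    exact fun ⟨hs, hc, _, hb⟩ => hscb ⟨hs, hc, hb⟩
  refine hEu (isUnit_of_isUnit_a_of_isUnit_schur ha ?_)
  exact (IsLocalRing.isUnit_or_isUnit_of_isUnit_add (by rwa [sub_add_cancel])).resolve_right hscab

lemma isSimilar_e11_or_e22 (hE : IsIdempotentElem E) (hE0 : E ≠ 0) (hE1 : E ≠ 1) :
    IsSimilar E ⟨1, 0, 0, 0⟩ ∨ IsSimilar E ⟨0, 0, 0, 1⟩ := by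
  have hEu : ¬IsUnit E := fun h => hE1 ((IsIdempotentElem.iff_eq_one_of_isUnit h).mp hE)
  have hFu : ¬IsUnit (1 - E) := fun h =>
    hE0 (sub_eq_self.mp ((IsIdempotentElem.iff_eq_one_of_isUnit h).mp hE.one_sub))
  rcases IsLocalRing.isUnit_or_isUnit_of_add_one (add_sub_cancel E.a 1) with ha | ha
  · exact .inl (isSimilar_e11_of_isUnit hE ha (isUnit_one_sub_d_of_isUnit_a hE hEu ha))
  · have hd := isUnit_one_sub_d_of_isUnit_a hE.one_sub hFu (by simpa using ha)
    exact .inr (isSimilar_e22_of_isUnit hE ha (by simpa using hd))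

end Local

end GenMatrix

/-- if `R` is local with `s` central and `E` is a nontrivial idempotent of
`K_s(R)`, then (1) if `s` is a unit, `E` is similar to `[[1,0],[0,0]]`; (2) if `s ∈ J(R)`,
`E` is similar to `[[1,0],[0,0]]` or to `[[0,0],[0,1]]`. -/
theorem genMatrix_idempotent_similar_diagonal {R : Type*} [Ring R] [IsLocalRing R] (s : R)
    [Fact (s ∈ Set.center R)] (E : GenMatrix R s) (hE : IsIdempotentElem E)
    (hE0 : E ≠ 0) (hE1 : E ≠ 1) :
    (IsUnit s → IsSimilar E (⟨1, 0, 0, 0⟩ : GenMatrix R s)) ∧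
    (s ∈ JacobsonRadical R →
      IsSimilar E (⟨1, 0, 0, 0⟩ : GenMatrix R s) ∨
      IsSimilar E (⟨0, 0, 0, 1⟩ : GenMatrix R s)) := by
  rcases GenMatrix.isSimilar_e11_or_e22 hE hE0 hE1 with h | h
  · exact ⟨fun _ => h, fun _ => .inl h⟩
  · exact ⟨fun hs => h.trans (GenMatrix.isSimilar_e22_e11 hs), fun _ => .inr h⟩
end

section
/- Let R be a local ring and let s ∈ J(R) be central. If A ∈ K_s(R) is neither a unit of K_s(R) nor quasinilpotent in K_s(R), then A is similar in K_s(R) to a matrix [[u,1],[v,w]] or to a matrix [[w,1],[v,u]], where u, v ∈ U(R) and w ∈ J(R). -/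
/-
If one diagonal entry of `A` is a unit and the other lies in `J(R)`, conjugation by a lower and
then an upper unitriangular matrix makes both off-diagonal entries units without disturbing the
diagonal modulo `J(R)`; a diagonal conjugation then normalises the `(1,2)` entry to `1`. This is
possible because `s ∈ J(R)`, so every `s`-twisted term produced by a conjugation lies in `J(R)`.
The case where the unit sits in the `(2,2)` position reduces to the first one by the automorphism
of `K_s(R)` exchanging the two indices. If both diagonal entries are units then `A` is a unit, and
if both lie in `J(R)` then so do the diagonal entries of `A * Y` for every `Y`, which makes
`1 + A * Y` a unit.
-/

section Jacobson

variable {R : Type*} [Ring R]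

instance : (JacobsonRadical R).IsTwoSided := inferInstanceAs (Ideal.jacobson ⊥).IsTwoSided

theorem isUnit_one_add_of_mem_jacobsonRadical {x : R} (hx : x ∈ JacobsonRadical R) :
    IsUnit (1 + x) := by
  have left_inv : ∀ y ∈ JacobsonRadical R, ∃ z, z * (1 + y) = 1 := fun y hy => by
    obtain ⟨z, hz⟩ := Ideal.exists_mul_add_sub_mem_of_mem_jacobson y hy
    exact ⟨z, by rwa [Submodule.mem_bot, sub_eq_zero, add_comm] at hz⟩
  obtain ⟨z, hz⟩ := left_inv x hx
  -- `z = 1 - z * x` again has a left inverse, which must then be `1 + x`.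
  obtain ⟨z', hz'⟩ := left_inv _ (neg_mem (Ideal.mul_mem_left _ z hx))
  rw [show 1 + -(z * x) = z by rw [← hz]; noncomm_ring] at hz'
  exact ⟨⟨1 + x, z, left_inv_eq_right_inv hz' hz ▸ hz', hz⟩, rfl⟩

theorem isUnit_add_of_mem_jacobsonRadical {a x : R} (ha : IsUnit a)
    (hx : x ∈ JacobsonRadical R) : IsUnit (a + x) := by
  obtain ⟨α, rfl⟩ := ha
  rw [show (α : R) + x = α * (1 + ↑α⁻¹ * x) by rw [mul_add, mul_one, Units.mul_inv_cancel_left]]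
  exact α.isUnit.mul (isUnit_one_add_of_mem_jacobsonRadical (Ideal.mul_mem_left _ _ hx))

theorem isUnit_sub_of_mem_jacobsonRadical {a x : R} (ha : IsUnit a)
    (hx : x ∈ JacobsonRadical R) : IsUnit (a - x) :=
  sub_eq_add_neg a x ▸ isUnit_add_of_mem_jacobsonRadical ha (neg_mem hx)

instance IsLocalRing.isDedekindFiniteMonoid [IsLocalRing R] : IsDedekindFiniteMonoid R where
  mul_eq_one_symm {a b} hab := by
    have hidem : IsIdempotentElem (b * a) := by
      rw [IsIdempotentElem, mul_assoc, ← mul_assoc a, hab, one_mul]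
    rcases IsLocalRing.isUnit_or_isUnit_of_add_one (add_sub_cancel (b * a) 1) with h | h
    · exact (IsIdempotentElem.iff_eq_one_of_isUnit h).mp hidem
    · have hb : b = 0 := h.mul_right_eq_zero.mp <| by
        rw [sub_mul, one_mul, mul_assoc, hab, mul_one, sub_self]
      simp [hb] at hab

theorem isUnit_or_mem_jacobsonRadical [IsLocalRing R] (x : R) :
    IsUnit x ∨ x ∈ JacobsonRadical R := by
  refine or_iff_not_imp_left.mpr fun hx => Ideal.mem_jacobson_iff.mpr fun y => ?_
  rcases IsLocalRing.isUnit_or_isUnit_of_add_one (neg_add_cancel_left (y * x) 1) with h | h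
  · exact absurd (isUnit_of_mul_isUnit_right ((IsUnit.neg_iff _).mp h)) hx
  · obtain ⟨z, hz⟩ := h.exists_left_inv
    exact ⟨z, by rw [Submodule.mem_bot, ← hz]; noncomm_ring⟩

end Jacobson

theorem IsSimilar.trans_s5 {R : Type*} [Ring R] {a b c : R} (hab : IsSimilar a b)
    (hbc : IsSimilar b c) : IsSimilar a c := by
  obtain ⟨u, rfl⟩ := hab
  obtain ⟨v, rfl⟩ := hbc
  exact ⟨u * v, by simp only [mul_inv_rev, Units.val_mul, mul_assoc]⟩

theorem IsSimilar.map {R S : Type*} [Ring R] [Ring S] (f : R →+* S) {a b : R}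
    (h : IsSimilar a b) : IsSimilar (f a) (f b) := by
  obtain ⟨u, rfl⟩ := h
  exact ⟨Units.map f u, by simp⟩

theorem isSimilar_of_mul_eq_mul {R : Type*} [Ring R] {a b : R} (u : Rˣ) (h : a * u = u * b) :
    IsSimilar a b :=
  ⟨u, by rw [mul_assoc, h, Units.inv_mul_cancel_left]⟩

namespace GenMatrix

variable {R : Type*} [Ring R] {s : R}

def flip : GenMatrix R s ≃+* GenMatrix R s where
  toFun X := ⟨X.d, X.c, X.b, X.a⟩
  invFun X := ⟨X.d, X.c, X.b, X.a⟩
  left_inv _ := rfl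
  right_inv _ := rfl
  map_mul' X Y := by ext <;> simp [add_comm]
  map_add' _ _ := rfl

@[simp] theorem flip_apply (X : GenMatrix R s) : flip X = ⟨X.d, X.c, X.b, X.a⟩ := rfl

variable [Fact (s ∈ Set.center R)]

def lowerUnit (m : R) : (GenMatrix R s)ˣ where
  val := ⟨1, 0, m, 1⟩
  inv := ⟨1, 0, -m, 1⟩
  val_inv := by ext <;> simp
  inv_val := by ext <;> simp

def upperUnit (p q : Rˣ) (b : R) : (GenMatrix R s)ˣ where
  val := ⟨p, b, 0, q⟩
  inv := ⟨↑p⁻¹, -(↑p⁻¹ * b * ↑q⁻¹), 0, ↑q⁻¹⟩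
  val_inv := by ext <;> simp [← mul_assoc]
  inv_val := by ext <;> simp

theorem isSimilar_lower_conj (A : GenMatrix R s) (m : R) :
    IsSimilar A ⟨A.a + s * (A.b * m), A.b, A.c + A.d * m - m * (A.a + s * (A.b * m)),
      A.d - s * (m * A.b)⟩ :=
  isSimilar_of_mul_eq_mul (lowerUnit m) <| by
    ext <;> simp [lowerUnit]

theorem isSimilar_upper_conj (A : GenMatrix R s) (y : R) :
    IsSimilar A ⟨A.a - s * (y * A.c), A.a * y + A.b - y * (s * (A.c * y) + A.d), A.c,
      s * (A.c * y) + A.d⟩ :=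
  isSimilar_of_mul_eq_mul (upperUnit 1 1 y) <| by
    ext <;> simp [upperUnit]

theorem isSimilar_diagonal_conj (A : GenMatrix R s) (t : Rˣ) :
    IsSimilar A ⟨A.a, A.b * ↑t⁻¹, t * A.c, t * A.d * ↑t⁻¹⟩ :=
  isSimilar_of_mul_eq_mul (upperUnit 1 t⁻¹ 0) <| by
    ext <;> simp [upperUnit, mul_assoc]

theorem isUnit_of_isUnit_a_of_isUnit_d (hs : s ∈ JacobsonRadical R) {X : GenMatrix R s}
    (ha : IsUnit X.a) (hd : IsUnit X.d) : IsUnit X := by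
  obtain ⟨α, hα⟩ := ha
  obtain ⟨δ, hδ⟩ := isUnit_sub_of_mem_jacobsonRadical (x := s * (X.c * ↑α⁻¹ * X.b)) hd
    (Ideal.mul_mem_right _ _ hs)
  have hLU : X = (lowerUnit (X.c * ↑α⁻¹) * upperUnit α δ X.b : (GenMatrix R s)ˣ) := by
    ext <;> simp [lowerUnit, upperUnit, ← hα, hδ, mul_assoc]
  rw [hLU]
  exact Units.isUnit _

theorem isQuasinilpotent_of_a_mem_of_d_mem (hs : s ∈ JacobsonRadical R) {A : GenMatrix R s}
    (ha : A.a ∈ JacobsonRadical R) (hd : A.d ∈ JacobsonRadical R) : IsQuasinilpotent A := by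
  intro Y _
  apply isUnit_of_isUnit_a_of_isUnit_d hs
  · exact isUnit_one_add_of_mem_jacobsonRadical <|
      add_mem (Ideal.mul_mem_right _ _ ha) (Ideal.mul_mem_right _ _ hs)
  · exact isUnit_one_add_of_mem_jacobsonRadical <|
      add_mem (Ideal.mul_mem_right _ _ hs) (Ideal.mul_mem_right _ _ hd)

theorem isSimilar_of_isSimilar_flip {A B : GenMatrix R s} (h : IsSimilar (flip A) B) :
    IsSimilar A (flip B) :=
  h.map (flip : GenMatrix R s ≃+* GenMatrix R s).toRingHom

theorem exists_isSimilar_isUnit_c (hs : s ∈ JacobsonRadical R) {A : GenMatrix R s}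
    (ha : IsUnit A.a) (hd : A.d ∈ JacobsonRadical R) :
    ∃ B : GenMatrix R s, IsSimilar A B ∧ IsUnit B.a ∧ IsUnit B.c ∧ B.d ∈ JacobsonRadical R := by
  obtain ⟨α, hα⟩ := ha
  set m := (A.c - 1) * ↑α⁻¹
  have hm : A.c - m * A.a = 1 := by simp [m, ← hα, mul_assoc]
  refine ⟨_, isSimilar_lower_conj A m, ?_, ?_, sub_mem hd (Ideal.mul_mem_right _ _ hs)⟩
  · exact isUnit_add_of_mem_jacobsonRadical ⟨α, hα⟩ (Ideal.mul_mem_right _ _ hs)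
  · rw [show A.c + A.d * m - m * (A.a + s * (A.b * m)) = 1 + (A.d * m - m * (s * (A.b * m))) by
      rw [← hm]; noncomm_ring]
    exact isUnit_one_add_of_mem_jacobsonRadical <| sub_mem (Ideal.mul_mem_right _ _ hd)
      (Ideal.mul_mem_left _ _ (Ideal.mul_mem_right _ _ hs))

theorem exists_isSimilar_isUnit_b (hs : s ∈ JacobsonRadical R) {A : GenMatrix R s}
    (ha : IsUnit A.a) (hd : A.d ∈ JacobsonRadical R) :
    ∃ B : GenMatrix R s, IsSimilar A B ∧ IsUnit B.a ∧ IsUnit B.b ∧ B.c = A.c ∧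
      B.d ∈ JacobsonRadical R := by
  obtain ⟨α, hα⟩ := ha
  set y := ↑α⁻¹ * (1 - A.b)
  have hy : A.a * y = 1 - A.b := by simp [y, ← hα]
  have hBd : s * (A.c * y) + A.d ∈ JacobsonRadical R := add_mem (Ideal.mul_mem_right _ _ hs) hd
  refine ⟨_, isSimilar_upper_conj A y, ?_, ?_, rfl, hBd⟩
  · exact isUnit_sub_of_mem_jacobsonRadical ⟨α, hα⟩ (Ideal.mul_mem_right _ _ hs)
  · rw [hy, sub_add_cancel]
    exact isUnit_sub_of_mem_jacobsonRadical isUnit_one (Ideal.mul_mem_left _ _ hBd)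

theorem exists_isSimilar_of_isUnit_a (hs : s ∈ JacobsonRadical R) {A : GenMatrix R s}
    (ha : IsUnit A.a) (hd : A.d ∈ JacobsonRadical R) :
    ∃ u v w : R, IsUnit u ∧ IsUnit v ∧ w ∈ JacobsonRadical R ∧ IsSimilar A ⟨u, 1, v, w⟩ := by
  obtain ⟨B, hAB, hBa, hBc, hBd⟩ := exists_isSimilar_isUnit_c hs ha hd
  obtain ⟨C, hBC, hCa, ⟨β, hβ⟩, hCc, hCd⟩ := exists_isSimilar_isUnit_b hs hBa hBd
  refine ⟨C.a, β * C.c, β * C.d * ↑β⁻¹, hCa, β.isUnit.mul (hCc ▸ hBc),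
    Ideal.mul_mem_right _ _ (Ideal.mul_mem_left _ _ hCd), ?_⟩
  have hCD := isSimilar_diagonal_conj C β
  rw [← hβ, Units.mul_inv] at hCD
  exact (hAB.trans_s5 hBC).trans_s5 hCD

theorem exists_isSimilar_of_isUnit_d (hs : s ∈ JacobsonRadical R) {A : GenMatrix R s}
    (ha : A.a ∈ JacobsonRadical R) (hd : IsUnit A.d) :
    ∃ u v w : R, IsUnit u ∧ IsUnit v ∧ w ∈ JacobsonRadical R ∧ IsSimilar A ⟨w, 1, v, u⟩ := by
  obtain ⟨u, v, w, hu, ⟨ν, rfl⟩, hw, hsim⟩ := exists_isSimilar_of_isUnit_a (A := flip A) hs hd ha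
  refine ⟨ν * u * ↑ν⁻¹, ν, w, (ν.isUnit.mul hu).mul ν⁻¹.isUnit, ν.isUnit, hw, ?_⟩
  have hD := isSimilar_diagonal_conj (flip (⟨u, 1, ν, w⟩ : GenMatrix R s)) ν
  simp only [flip_apply, Units.mul_inv, mul_one] at hD
  exact (isSimilar_of_isSimilar_flip hsim).trans_s5 hD

end GenMatrix

/-- if `R` is local, `s ∈ J(R)` is central, and `A ∈ K_s(R)` is neither a unit
nor quasinilpotent, then `A` is similar to `[[u,1],[v,w]]` or `[[w,1],[v,u]]` with
`u, v ∈ U(R)` and `w ∈ J(R)`. -/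
theorem genMatrix_similar_standard_form {R : Type*} [Ring R] [IsLocalRing R] (s : R)
    [Fact (s ∈ Set.center R)] (hs : s ∈ JacobsonRadical R) (A : GenMatrix R s)
    (hA1 : ¬ IsUnit A) (hA2 : ¬ IsQuasinilpotent A) :
    ∃ u v w : R, IsUnit u ∧ IsUnit v ∧ w ∈ JacobsonRadical R ∧
      (IsSimilar A (⟨u, 1, v, w⟩ : GenMatrix R s) ∨
       IsSimilar A (⟨w, 1, v, u⟩ : GenMatrix R s)) := by
  rcases isUnit_or_mem_jacobsonRadical A.a with ha | ha <;>
    rcases isUnit_or_mem_jacobsonRadical A.d with hd | hd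
  · exact absurd (GenMatrix.isUnit_of_isUnit_a_of_isUnit_d hs ha hd) hA1
  · obtain ⟨u, v, w, hu, hv, hw, h⟩ := GenMatrix.exists_isSimilar_of_isUnit_a hs ha hd
    exact ⟨u, v, w, hu, hv, hw, .inl h⟩
  · obtain ⟨u, v, w, hu, hv, hw, h⟩ := GenMatrix.exists_isSimilar_of_isUnit_d hs ha hd
    exact ⟨u, v, w, hu, hv, hw, .inr h⟩
  · exact absurd (GenMatrix.isQuasinilpotent_of_a_mem_of_d_mem hs ha hd) hA2
end
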